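/- Let [P,Q] be a path presentation with a proper k×k square at position i, and let T_i(P) = k East steps + P_i', T_i(Q) = k North steps + Q_i', where P_i', Q_i' are the suffixes of P, Q after position i. Then M[T_i(P), T_i(Q)] is a minor of M[P,Q]. -/

import Mathlib

open Matroid

/-- Steps: `true` is a North step, `false` is an East step. -/
def nCount (w : List Bool) : ℕ := w.count true

def eCount (w : List Bool) : ℕ := w.count false

/-- `P` and `Q` are lattice paths from `(0,0)` to `(m,r)` with `P` never above `Q`. -/
structure IsLatticePair (P Q : List Bool) (m r : ℕ) : Prop where
  lenP : P.length = m + r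
  lenQ : Q.length = m + r
  northP : nCount P = r
  northQ : nCount Q = r
  notAbove : ∀ i, nCount (P.take i) ≤ nCount (Q.take i)

/-- The (1-indexed) positions of the North steps of a path. -/
def northPositions (w : List Bool) : List ℕ :=
  ((List.range w.length).filter (fun j => w.getD j false)).map (· + 1)

/-- `X` is a partial transversal of the intervals `N_i = [l_i, u_i]`, `i < r`, where
`u_i` (resp. `l_i`) is the position of the `i`-th North step of `P` (resp. `Q`). -/
def IsPartialTransversal (P Q : List Bool) (r : ℕ) (X : Set ℕ) : Prop :=
  ∃ f : ℕ → ℕ, Set.InjOn f X ∧ ∀ x ∈ X, f x < r ∧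
    (northPositions Q).getD (f x) 0 ≤ x ∧ x ≤ (northPositions P).getD (f x) 0

/-- `M` is the lattice path matroid `M[P,Q]`: the transversal matroid on `[m+r]`
whose independent sets are the partial transversals of the intervals `N_i`. -/
def IsLPM (M : Matroid ℕ) (P Q : List Bool) (m r : ℕ) : Prop :=
  IsLatticePair P Q m r ∧ M.E = Set.Icc 1 (m + r) ∧
    ∀ X : Set ℕ, M.Indep X ↔ X ⊆ M.E ∧ IsPartialTransversal P Q r X

/-- `[P,Q]` has a `k × k` square at `i`: the length-`i` prefix of `P` has exactly `k`
more East steps than that of `Q`, and the prefix of `Q` has `k` more North steps. -/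
def HasSquareAt (P Q : List Bool) (k i : ℕ) : Prop :=
  eCount (P.take i) = eCount (Q.take i) + k ∧ nCount (Q.take i) = nCount (P.take i) + k

/-- The square-width of a presentation: the largest `k` such that it has a `k × k` square. -/
noncomputable def squareWidth (P Q : List Bool) : ℕ :=
  sSup {k | ∃ i, HasSquareAt P Q k i}

/-- `N` is a minor of `M`: obtained by contracting a set `C` and deleting a set `D`. -/
def IsMinorOf {α : Type*} (N M : Matroid α) : Prop :=
  ∃ C D : Set α, C ⊆ M.E ∧ D ⊆ M.E ∧ Disjoint C D ∧
    N = ((M✶ ↾ (M.E \ C))✶) ↾ ((M.E \ C) \ D)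

/-- An isomorphism between matroids: a bijection of ground sets preserving independence. -/
def MatroidIso {α β : Type*} (M : Matroid α) (N : Matroid β) : Prop :=
  ∃ f : α → β, Set.BijOn f M.E N.E ∧ ∀ X ⊆ M.E, (M.Indep X ↔ N.Indep (f '' X))

/-- `N` is isomorphic to a minor of `M`. -/
def IsIsoMinorOf {α β : Type*} (N : Matroid α) (M : Matroid β) : Prop :=
  ∃ N' : Matroid β, IsMinorOf N' M ∧ MatroidIso N' N

/-- `M` is (isomorphic to) the uniform matroid `U_{r,n}`. -/
def IsUniform {α : Type*} (M : Matroid α) (r n : ℕ) : Prop :=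
  M.E.encard = (n : ℕ∞) ∧ ∀ X ⊆ M.E, (M.Indep X ↔ X.encard ≤ (r : ℕ∞))

/-- The rank (in `ℕ∞`) of a set in a matroid. -/
noncomputable def eRk {α : Type*} (M : Matroid α) (A : Set α) : ℕ∞ :=
  ⨆ I : {I : Set α // M.Indep I ∧ I ⊆ A}, (I : Set α).encard

/-- Binary trees, used to model the cubic trees of branch decompositions. -/
inductive BTree (α : Type*) where
  | leaf : α → BTree α
  | node : BTree α → BTree α → BTree α

def BTree.leafList {α : Type*} : BTree α → List α
  | .leaf a => [a]
  | .node l r => l.leafList ++ r.leafList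

def BTree.subtrees {α : Type*} : BTree α → List (BTree α)
  | .leaf a => [.leaf a]
  | .node l r => .node l r :: (l.subtrees ++ r.subtrees)

/-- The connectivity value `λ(A) = r(A) + r(E \ A) − r(E) + 1`. -/
noncomputable def lamVal {α : Type*} (M : Matroid α) (A : Set α) : ℕ∞ :=
  _root_.eRk M A + _root_.eRk M (M.E \ A) - _root_.eRk M M.E + 1

/-- A branch decomposition of `M`: a (cubic) tree whose leaves are bijectively
labelled by the elements of `M`. -/
def IsBranchDecomp {α : Type*} (M : Matroid α) (t : BTree α) : Prop :=
  t.leafList.Nodup ∧ {x | x ∈ t.leafList} = M.E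

/-- The width of a branch decomposition: the maximum of `λ` over the edges
(equivalently, over the leaf sets of the subtrees). -/
noncomputable def decompWidth {α : Type*} (M : Matroid α) (t : BTree α) : ℕ∞ :=
  (t.subtrees.map (fun s => lamVal M {x | x ∈ s.leafList})).foldr max 0

/-- The branch-width of a matroid. -/
noncomputable def branchWidth {α : Type*} (M : Matroid α) : ℕ∞ :=
  sInf {w | ∃ t : BTree α, IsBranchDecomp M t ∧ decompWidth M t = w}

/-- The lattice path `P(X)` associated to a subset `X` of `[len]`. -/
noncomputable def pathWord (X : Set ℕ) (len : ℕ) : List Bool :=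
  (List.range len).map (fun j => @decide ((j + 1) ∈ X) (Classical.propDecidable _))

def glue (PB QB PT QT : List Bool) (k : ℕ) : List Bool × List Bool :=
  (PB.take (PB.length - k) ++ PT.drop k, QB.take (QB.length - k) ++ QT.drop k)

/-!
Let `a` be the number of North steps among the first `i` steps of `P`; by the square, `Q` has
`a + k` of them, at positions `l_0 < ⋯ < l_{a+k-1} ≤ i`, while the intervals `N_t`, `t ≥ a`,
all end after `i`. Contract `l_0, …, l_{a-1}` and delete the rest of `[1, i]` except
`l_a, …, l_{a+k-1}`. Since `l_s` lies in no interval `N_t` with `t > s`, in a transversal the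
contracted elements occupy exactly `N_0, …, N_{a-1}`, so the minor is the transversal matroid
of `N_a, …, N_{r-1}` on the surviving elements. Relabelling `l_{a+j} ↦ j + 1` and
`x ↦ x - i + k` for `x > i` turns these intervals into those of `[T_i(P), T_i(Q)]`: the lower
ends of `N_a, …, N_{a+k-1}` become the `k` initial North steps of `T_i(Q)`, and all other
endpoints are shifted by `k - i`.
-/

open Set

lemma nCount_append (u v : List Bool) : nCount (u ++ v) = nCount u + nCount v :=
  List.count_append

lemma nCount_le_length (w : List Bool) : nCount w ≤ w.length :=
  List.count_le_length

lemma nCount_take_le (w : List Bool) (j : ℕ) : nCount (w.take j) ≤ nCount w :=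
  List.Sublist.count_le _ (List.take_sublist _ _)

lemma nCount_take_add_nCount_drop (w : List Bool) (j : ℕ) :
    nCount (w.take j) + nCount (w.drop j) = nCount w := by
  rw [← nCount_append, List.take_append_drop]

lemma nCount_replicate_false (k : ℕ) : nCount (List.replicate k false) = 0 := by
  simp [nCount, List.count_replicate]

lemma nCount_replicate_true (k : ℕ) : nCount (List.replicate k true) = k := by
  simp [nCount]

lemma eCount_add_nCount (w : List Bool) : eCount w + nCount w = w.length :=
  List.count_false_add_count_true w

lemma northPositions_append (u v : List Bool) :
    northPositions (u ++ v) = northPositions u ++ (northPositions v).map (· + u.length) := by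
  unfold northPositions
  rw [List.length_append, List.range_add, List.filter_append, List.map_append, List.filter_map,
    List.map_map, List.map_map]
  congr 2
  · exact List.filter_congr fun j hj => by rw [List.getD_append _ _ _ _ (List.mem_range.mp hj)]
  · funext j; simp only [Function.comp]; omega
  · exact List.filter_congr fun j _ => by
      simp only [Function.comp, List.getD_append_right _ _ _ _ (Nat.le_add_right _ _),
        Nat.add_sub_cancel_left]

lemma length_northPositions (w : List Bool) : (northPositions w).length = nCount w := by
  induction w with
  | nil => rfl
  | cons b w ih =>
    rw [← List.singleton_append, northPositions_append, List.length_append, List.length_map, ih,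
      nCount_append]
    cases b <;> rfl

lemma mem_Icc_of_mem_northPositions {w : List Bool} {x : ℕ} (hx : x ∈ northPositions w) :
    x ∈ Icc 1 w.length := by
  simp only [northPositions, List.mem_map, List.mem_filter, List.mem_range] at hx
  obtain ⟨j, ⟨hj, -⟩, rfl⟩ := hx
  exact ⟨by omega, hj⟩

lemma pairwise_lt_northPositions (w : List Bool) : (northPositions w).Pairwise (· < ·) :=
  (List.pairwise_lt_range.filter _).map _ fun _ _ h => Nat.add_lt_add_right h 1

/-- The position of the North step of `w` with index `t`; steps are numbered from `1`,
North steps from `0`, and the junk value is `0`. -/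
def northPos (w : List Bool) (t : ℕ) : ℕ := (northPositions w).getD t 0

section NorthPos

variable {u v w : List Bool} {t j k : ℕ}

lemma northPos_mem (ht : t < nCount w) : northPos w t ∈ northPositions w := by
  rw [← length_northPositions] at ht
  rw [northPos, List.getD_eq_getElem _ _ ht]
  exact List.getElem_mem _

lemma one_le_northPos (ht : t < nCount w) : 1 ≤ northPos w t :=
  (mem_Icc_of_mem_northPositions (northPos_mem ht)).1

lemma northPos_le_length (ht : t < nCount w) : northPos w t ≤ w.length :=
  (mem_Icc_of_mem_northPositions (northPos_mem ht)).2

lemma northPos_strictMonoOn : StrictMonoOn (northPos w) (Iio (nCount w)) := by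
  intro s hs t ht hst
  rw [mem_Iio, ← length_northPositions] at hs ht
  rw [northPos, northPos, List.getD_eq_getElem _ _ hs, List.getD_eq_getElem _ _ ht]
  exact List.pairwise_iff_getElem.mp (pairwise_lt_northPositions w) s t hs ht hst

lemma northPos_append_of_lt (ht : t < nCount u) : northPos (u ++ v) t = northPos u t := by
  rw [northPos, northPos, northPositions_append,
    List.getD_append _ _ _ _ (by rwa [length_northPositions])]

lemma northPos_append_add (ht : t < nCount v) :
    northPos (u ++ v) (nCount u + t) = northPos v t + u.length := by
  rw [← length_northPositions] at ht
  rw [northPos, northPos, northPositions_append, ← length_northPositions,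
    List.getD_append_right _ _ _ _ (Nat.le_add_right _ _), Nat.add_sub_cancel_left,
    List.getD_eq_getElem _ _ (by simpa using ht), List.getElem_map,
    List.getD_eq_getElem _ _ ht]

lemma northPos_le_iff (ht : t < nCount w) : northPos w t ≤ j ↔ t < nCount (w.take j) := by
  have hw := List.take_append_drop j w
  by_cases htj : t < nCount (w.take j)
  · refine iff_of_true ?_ htj
    have key := northPos_append_of_lt (v := w.drop j) htj
    rw [hw] at key
    rw [key]
    exact (northPos_le_length htj).trans (List.length_take_le _ _)
  · obtain ⟨s, rfl⟩ := Nat.exists_eq_add_of_le (not_lt.mp htj)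
    have hs : s < nCount (w.drop j) := by
      have := nCount_take_add_nCount_drop w j
      omega
    refine iff_of_false ?_ htj
    have key := northPos_append_add (u := w.take j) hs
    rw [hw] at key
    rw [key, List.length_take]
    have := one_le_northPos hs
    have := nCount_le_length (w.drop j)
    rw [List.length_drop] at this
    omega

lemma nCount_take_northPos (ht : t < nCount w) : nCount (w.take (northPos w t)) = t + 1 := by
  have hlt := (northPos_le_iff ht).mp le_rfl
  by_contra hne
  have ht1 : t + 1 < nCount w :=
    lt_of_lt_of_le (show t + 1 < nCount (w.take (northPos w t)) by omega) (nCount_take_le _ _)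
  have := (northPos_le_iff ht1 (j := northPos w t)).mpr (by omega)
  exact absurd (northPos_strictMonoOn (mem_Iio.mpr ht) (mem_Iio.mpr ht1) (Nat.lt_succ_self t))
    (not_lt.mpr this)

lemma northPos_replicate_true (ht : t < k) : northPos (List.replicate k true) t = t + 1 := by
  have hk : t < nCount (List.replicate k true) := by rwa [nCount_replicate_true]
  have h := nCount_take_northPos hk
  have := northPos_le_length hk
  simp only [nCount, List.take_replicate, List.count_replicate_self, List.length_replicate] at h this
  omega

lemma northPos_le_northPos {P Q : List Bool} (hPQ : ∀ j, nCount (P.take j) ≤ nCount (Q.take j))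
    (ht : t < nCount P) : northPos Q t ≤ northPos P t := by
  have h := (hPQ _).trans_lt' ((northPos_le_iff ht).mp le_rfl)
  exact (northPos_le_iff (h.trans_le (nCount_take_le _ _))).mpr h

lemma northPos_mem_Icc (ht : t < nCount (w.take j)) : northPos w t ∈ Icc 1 j := by
  have htw : t < nCount w := ht.trans_le (nCount_take_le _ _)
  exact ⟨one_le_northPos htw, (northPos_le_iff htw).mpr ht⟩

lemma northPos_nCount_take_add (hj : j ≤ w.length) (ht : t < nCount (w.drop j)) :
    northPos w (nCount (w.take j) + t) = northPos (w.drop j) t + j := by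
  have h := northPos_append_add (u := w.take j) ht
  rwa [List.take_append_drop, List.length_take_of_le hj] at h

lemma northPos_replicate_false_append (ht : t < nCount v) :
    northPos (List.replicate k false ++ v) t = northPos v t + k := by
  have h := northPos_append_add (u := List.replicate k false) ht
  rwa [nCount_replicate_false, zero_add, List.length_replicate] at h

lemma northPos_replicate_true_append_of_lt (ht : t < k) :
    northPos (List.replicate k true ++ v) t = t + 1 := by
  rw [northPos_append_of_lt (by rwa [nCount_replicate_true]), northPos_replicate_true ht]

lemma northPos_replicate_true_append_add (ht : t < nCount v) :
    northPos (List.replicate k true ++ v) (k + t) = northPos v t + k := by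
  have h := northPos_append_add (u := List.replicate k true) ht
  rwa [nCount_replicate_true, List.length_replicate] at h

end NorthPos

section PartialTransversal

variable {α β : Type*}

def IsPartialTransversalOf (A : ℕ → Set α) (r : ℕ) (X : Set α) : Prop :=
  ∃ f : α → ℕ, InjOn f X ∧ ∀ x ∈ X, f x < r ∧ x ∈ A (f x)

lemma isPartialTransversal_iff {P Q : List Bool} {r : ℕ} {X : Set ℕ} :
    IsPartialTransversal P Q r X ↔
      IsPartialTransversalOf (fun t => Icc (northPos Q t) (northPos P t)) r X :=
  Iff.rfl

lemma isPartialTransversalOf_image_iff [Nonempty α] {A : ℕ → Set α} {B : ℕ → Set β}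
    {φ : α → β} {r : ℕ} {X : Set α} (hφ : InjOn φ X)
    (hAB : ∀ x ∈ X, ∀ t < r, φ x ∈ B t ↔ x ∈ A t) :
    IsPartialTransversalOf B r (φ '' X) ↔ IsPartialTransversalOf A r X := by
  constructor
  · rintro ⟨f, hf, hfB⟩
    refine ⟨f ∘ φ, fun x hx y hy hxy => hφ hx hy (hf (mem_image_of_mem φ hx)
      (mem_image_of_mem φ hy) hxy), fun x hx => ?_⟩
    obtain ⟨hfr, hB⟩ := hfB _ (mem_image_of_mem φ hx)
    exact ⟨hfr, (hAB x hx _ hfr).mp hB⟩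
  · rintro ⟨g, hg, hgA⟩
    have hinv := hφ.leftInvOn_invFunOn
    refine ⟨g ∘ Function.invFunOn φ X, ?_, ?_⟩
    · rintro _ ⟨x, hx, rfl⟩ _ ⟨y, hy, rfl⟩ hxy
      simp only [Function.comp, hinv hx, hinv hy] at hxy
      rw [hg hx hy hxy]
    · rintro _ ⟨x, hx, rfl⟩
      simp only [Function.comp, hinv hx]
      obtain ⟨hgr, hA⟩ := hgA x hx
      exact ⟨hgr, (hAB x hx _ hgr).mpr hA⟩

/-- `c s` can only represent a set of index `≤ s`, so the representatives `c s`, `s < a`,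
exhaust the first `a` sets. -/
lemma isPartialTransversalOf_union_image_iff {A : ℕ → Set α} {c : ℕ → α} {r a : ℕ}
    {X : Set α} (har : a ≤ r) (hcA : ∀ s < a, c s ∈ A s)
    (hcA' : ∀ s < a, ∀ t, s < t → t < r → c s ∉ A t) (hX : Disjoint X (c '' Iio a)) :
    IsPartialTransversalOf A r (X ∪ c '' Iio a) ↔
      IsPartialTransversalOf (fun t => A (a + t)) (r - a) X := by
  have hc : InjOn c (Iio a) := by
    intro s hs t ht hst
    by_contra hne
    rcases lt_or_gt_of_ne hne with h | h
    · exact hcA' s hs t h (by grind) (hst ▸ hcA t ht)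
    · exact hcA' t ht s h (by grind) (hst ▸ hcA s hs)
  constructor
  · rintro ⟨f, hf, hfA⟩
    have hfc : ∀ s < a, f (c s) ≤ s := fun s hs => by
      obtain ⟨hr, hA⟩ := hfA _ (Or.inr (mem_image_of_mem c hs))
      by_contra! h
      exact hcA' s hs _ h hr hA
    have hsurj : SurjOn (f ∘ c) (Iio a) (Iio a) :=
      ((finite_Iio a).injOn_iff_bijOn_of_mapsTo
        (fun s hs => (hfc s hs).trans_lt hs)).mp
        (fun s hs t ht hst => hc hs ht (hf (Or.inr (mem_image_of_mem c hs))
          (Or.inr (mem_image_of_mem c ht)) hst)) |>.surjOn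
    have hfX : ∀ x ∈ X, a ≤ f x := fun x hx => by
      by_contra! h
      obtain ⟨s, hs, hsx⟩ := hsurj h
      have := hf (Or.inr (mem_image_of_mem c hs)) (Or.inl hx) hsx
      exact hX.ne_of_mem hx (mem_image_of_mem c hs) this.symm
    refine ⟨fun x => f x - a, fun x hx y hy hxy => hf (Or.inl hx) (Or.inl hy) ?_, fun x hx => ?_⟩
    · have := hfX x hx; have := hfX y hy; simp only at hxy; omega
    · obtain ⟨hr, hA⟩ := hfA x (Or.inl hx)
      refine ⟨show f x - a < r - a by have := hfX x hx; omega, ?_⟩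
      show x ∈ A (a + (f x - a))
      rwa [Nat.add_sub_cancel' (hfX x hx)]
  · rintro ⟨g, hg, hgA⟩
    have hinv := hc.leftInvOn_invFunOn
    have hcX : ∀ s < a, c s ∉ X := fun s hs hsX => hX.ne_of_mem hsX (mem_image_of_mem c hs) rfl
    classical
    refine ⟨fun x => if x ∈ X then a + g x else Function.invFunOn c (Iio a) x, ?_, ?_⟩
    · rintro x (hx | ⟨s, hs, rfl⟩) y (hy | ⟨t, ht, rfl⟩) hxy
      · simp only [hx, hy, if_true] at hxy
        exact hg hx hy (by omega)
      · simp only [hx, hcX t ht, if_true, if_false, hinv ht] at hxy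
        exact absurd hxy (by grind)
      · simp only [hy, hcX s hs, if_true, if_false, hinv hs] at hxy
        exact absurd hxy (by grind)
      · simp only [hcX s hs, hcX t ht, if_false, hinv hs, hinv ht] at hxy
        rw [hxy]
    · rintro x (hx | ⟨s, hs, rfl⟩)
      · simp only [hx, if_true]
        obtain ⟨hr, hA⟩ := hgA x hx
        exact ⟨by omega, hA⟩
      · simp only [hcX _ hs, if_false, hinv hs]
        exact ⟨by grind, hcA s hs⟩

end PartialTransversal

lemma isIsoMinorOf_of_contract {α β : Type*} {M : Matroid α} {N : Matroid β} {C E₀ : Set α}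
    {φ : α → β} (hC : M.Indep C) (hE₀ : E₀ ⊆ M.E \ C) (hφ : BijOn φ E₀ N.E)
    (hind : ∀ X ⊆ E₀, M.Indep (X ∪ C) ↔ N.Indep (φ '' X)) : IsIsoMinorOf N M := by
  refine ⟨M ／ C ↾ E₀, ⟨C, (M.E \ C) \ E₀, hC.subset_ground, sdiff_subset.trans sdiff_subset,
    disjoint_sdiff_right.mono_right sdiff_subset, ?_⟩, φ, hφ, fun X hX => ?_⟩
  · rw [sdiff_sdiff_cancel_left hE₀]
    rfl
  · rw [restrict_indep_iff, hC.contract_indep_iff, ← hind X hX]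
    have hXC : Disjoint X C := disjoint_of_subset_left (hX.trans hE₀) disjoint_sdiff_left
    tauto

section Square

variable {P Q : List Bool} {m r k i a t : ℕ}

/-- Sends the North steps of `Q` with indices in `[a, a + k)` to `1, …, k` and shifts the
steps after `i` down by `i - k`. -/
def squareMap (Q : List Bool) (k i a x : ℕ) : ℕ :=
  if x ≤ i then nCount (Q.take x) - a else x - i + k

def squareMapInv (Q : List Bool) (k i a y : ℕ) : ℕ :=
  if y ≤ k then northPos Q (a + y - 1) else y + i - k

def squareGround (Q : List Bool) (n k i a : ℕ) : Set ℕ :=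
  northPos Q '' Ico a (a + k) ∪ Ioc i n

lemma squareMap_northPos (hQi : nCount (Q.take i) = a + k) {j : ℕ} (hj : j < k) :
    squareMap Q k i a (northPos Q (a + j)) = j + 1 := by
  have hlt : a + j < nCount (Q.take i) := by omega
  have hQ : a + j < nCount Q := hlt.trans_le (nCount_take_le _ _)
  rw [squareMap, if_pos (northPos_mem_Icc hlt).2, nCount_take_northPos hQ]
  omega

lemma squareMap_of_lt {x : ℕ} (hx : i < x) : squareMap Q k i a x = x - i + k :=
  if_neg (not_le.mpr hx)

lemma squareMap_bijOn (hQi : nCount (Q.take i) = a + k) (n : ℕ) :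
    BijOn (squareMap Q k i a) (squareGround Q n k i a) (Icc 1 (k + (n - i))) := by
  refine InvOn.bijOn (f' := squareMapInv Q k i a) ⟨?_, ?_⟩ ?_ ?_
  · rintro x (⟨j, hj, rfl⟩ | ⟨hix, -⟩)
    · obtain ⟨j, rfl⟩ := Nat.exists_eq_add_of_le hj.1
      rw [squareMap_northPos hQi (by grind), squareMapInv, if_pos (by grind)]
      rfl
    · rw [squareMap_of_lt hix, squareMapInv, if_neg (by omega)]
      omega
  · rintro y ⟨hy1, hy⟩
    by_cases hyk : y ≤ k
    · rw [squareMapInv, if_pos hyk, show a + y - 1 = a + (y - 1) by omega,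
        squareMap_northPos hQi (by omega)]
      omega
    · rw [squareMapInv, if_neg hyk, squareMap_of_lt (by omega)]
      omega
  · rintro x (⟨j, hj, rfl⟩ | ⟨hix, hxn⟩)
    · obtain ⟨j, rfl⟩ := Nat.exists_eq_add_of_le hj.1
      rw [squareMap_northPos hQi (by grind)]
      exact ⟨by omega, by grind⟩
    · rw [squareMap_of_lt hix]
      exact ⟨by omega, by omega⟩
  · rintro y ⟨hy1, hy⟩
    by_cases hyk : y ≤ k
    · rw [squareMapInv, if_pos hyk]
      exact Or.inl ⟨a + y - 1, ⟨by omega, by omega⟩, rfl⟩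
    · rw [squareMapInv, if_neg hyk]
      exact Or.inr ⟨by omega, by omega⟩

lemma IsLatticePair.nCount_drop_add_of_square (hPQ : IsLatticePair P Q m r)
    (hsq : HasSquareAt P Q k i) : nCount (Q.drop i) + k = nCount (P.drop i) := by
  have := nCount_take_add_nCount_drop P i
  have := nCount_take_add_nCount_drop Q i
  have := hPQ.northP
  have := hPQ.northQ
  have := hsq.2
  omega

lemma northPos_shift_upper (hPQ : IsLatticePair P Q m r) (hi : i ≤ m + r)
    (ha : nCount (P.take i) = a) (ht : t < nCount (P.drop i)) :
    northPos (List.replicate k false ++ P.drop i) t + i = northPos P (a + t) + k ∧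
      i < northPos P (a + t) := by
  have h := northPos_nCount_take_add (by rw [hPQ.lenP]; exact hi) ht
  have := one_le_northPos ht
  rw [ha] at h
  rw [northPos_replicate_false_append ht, h]
  omega

lemma northPos_shift_lower (hPQ : IsLatticePair P Q m r) (hsq : HasSquareAt P Q k i)
    (hi : i ≤ m + r) (ha : nCount (P.take i) = a) (htk : k ≤ t) (ht : t < nCount (P.drop i)) :
    northPos (List.replicate k true ++ Q.drop i) t + i = northPos Q (a + t) + k ∧
      i < northPos Q (a + t) := by
  obtain ⟨s, rfl⟩ := Nat.exists_eq_add_of_le htk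
  have hs : s < nCount (Q.drop i) := by have := hPQ.nCount_drop_add_of_square hsq; omega
  have h := northPos_nCount_take_add (by rw [hPQ.lenQ]; exact hi) hs
  have := one_le_northPos hs
  rw [show nCount (Q.take i) = a + k from ha ▸ hsq.2, add_assoc] at h
  rw [northPos_replicate_true_append_add hs, h]
  omega

lemma squareMap_mem_Icc_iff (hPQ : IsLatticePair P Q m r) (hsq : HasSquareAt P Q k i)
    (hi : i ≤ m + r) (ha : nCount (P.take i) = a) {x : ℕ}
    (hx : x ∈ squareGround Q (m + r) k i a) (ht : t < nCount (P.drop i)) :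
    squareMap Q k i a x ∈ Icc (northPos (List.replicate k true ++ Q.drop i) t)
        (northPos (List.replicate k false ++ P.drop i) t) ↔
      x ∈ Icc (northPos Q (a + t)) (northPos P (a + t)) := by
  have hQi : nCount (Q.take i) = a + k := ha ▸ hsq.2
  obtain ⟨hU, hUi⟩ := northPos_shift_upper (k := k) hPQ hi ha ht
  have hL := fun htk => northPos_shift_lower hPQ hsq hi ha htk ht
  simp only [mem_Icc]
  rcases hx with ⟨_, ⟨hja, hjk⟩, rfl⟩ | ⟨hix, -⟩
  · obtain ⟨j, rfl⟩ := Nat.exists_eq_add_of_le hja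
    have hj : northPos Q (a + j) ≤ i := (northPos_mem_Icc (by omega : a + j < nCount (Q.take i))).2
    rw [squareMap_northPos hQi (by omega)]
    rcases lt_or_ge t k with htk | htk
    · have hQ : a + k ≤ nCount Q := hQi ▸ nCount_take_le _ _
      rw [northPos_replicate_true_append_of_lt htk,
        northPos_strictMonoOn.le_iff_le (by grind) (by grind)]
      omega
    · have := hL htk
      omega
  · rw [squareMap_of_lt hix]
    rcases lt_or_ge t k with htk | htk
    · have := (northPos_mem_Icc (by omega : a + t < nCount (Q.take i))).2
      rw [northPos_replicate_true_append_of_lt htk]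
      omega
    · have := hL htk
      omega

lemma squareGround_union_subset_Icc (hQi : nCount (Q.take i) = a + k) {n : ℕ} (hi : i ≤ n) :
    squareGround Q n k i a ∪ northPos Q '' Iio a ⊆ Icc 1 n := by
  rintro _ ((⟨j, hj, rfl⟩ | ⟨hix, hxn⟩) | ⟨j, hj, rfl⟩)
  · have := northPos_mem_Icc (w := Q) (show j < nCount (Q.take i) by grind)
    exact ⟨this.1, this.2.trans hi⟩
  · exact ⟨by omega, hxn⟩
  · have := northPos_mem_Icc (w := Q) (show j < nCount (Q.take i) by grind)
    exact ⟨this.1, this.2.trans hi⟩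

lemma disjoint_squareGround (hQi : nCount (Q.take i) = a + k) (n : ℕ) :
    Disjoint (squareGround Q n k i a) (northPos Q '' Iio a) := by
  have hQ : a + k ≤ nCount Q := hQi ▸ nCount_take_le _ _
  rw [Set.disjoint_right]
  rintro _ ⟨s, hs, rfl⟩ (⟨j, hj, hjs⟩ | ⟨hix, -⟩)
  · have := northPos_strictMonoOn.injOn (by grind) (by grind) hjs
    grind
  · have := (northPos_mem_Icc (w := Q) (show s < nCount (Q.take i) by grind)).2
    omega

lemma isPartialTransversal_union_iff (hPQ : IsLatticePair P Q m r) (hsq : HasSquareAt P Q k i)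
    (hi : i ≤ m + r) (ha : nCount (P.take i) = a) {X : Set ℕ}
    (hX : X ⊆ squareGround Q (m + r) k i a) :
    IsPartialTransversal P Q r (X ∪ northPos Q '' Iio a) ↔
      IsPartialTransversal (List.replicate k false ++ P.drop i)
        (List.replicate k true ++ Q.drop i) (nCount (P.drop i)) (squareMap Q k i a '' X) := by
  have hQi : nCount (Q.take i) = a + k := ha ▸ hsq.2
  have hQ : a + k ≤ r := hPQ.northQ ▸ hQi ▸ nCount_take_le _ _
  have hr : r - a = nCount (P.drop i) := by
    have := nCount_take_add_nCount_drop P i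
    have := hPQ.northP
    omega
  rw [isPartialTransversal_iff, isPartialTransversal_iff,
    isPartialTransversalOf_union_image_iff (by omega) ?_ ?_
      ((disjoint_squareGround hQi _).mono_left hX), hr,
    isPartialTransversalOf_image_iff ((squareMap_bijOn hQi _).injOn.mono hX)
      fun x hx t ht => squareMap_mem_Icc_iff hPQ hsq hi ha (hX hx) ht]
  · exact fun s hs => ⟨le_rfl, northPos_le_northPos hPQ.notAbove (by rw [hPQ.northP]; omega)⟩
  · intro s hs t hst htr hmem
    have := northPos_strictMonoOn (w := Q) (by rw [mem_Iio, hPQ.northQ]; omega)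
      (by rw [mem_Iio, hPQ.northQ]; omega) hst
    exact absurd hmem.1 (not_le.mpr this)

end Square

/-- If `[P,Q]` has a proper `k × k` square at `i`, then the lattice path matroid of
`[T_i(P), T_i(Q)]`, where `T_i(P) = k` East steps `+ P_i'` and `T_i(Q) = k` North
steps `+ Q_i'`, is a minor of `M[P,Q]`. -/
theorem stmt_14 (P Q : List Bool) (m r k i : ℕ) (M MT : Matroid ℕ)
    (hM : IsLPM M P Q m r) (hsq : HasSquareAt P Q k i)
    (hproper : k + 1 ≤ i ∧ i ≤ m + r - k - 1)
    (hMT : IsLPM MT (List.replicate k false ++ P.drop i)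
      (List.replicate k true ++ Q.drop i)
      (k + eCount (P.drop i)) (nCount (P.drop i))) :
    IsIsoMinorOf MT M := by
  obtain ⟨hPQ, hME, hMind⟩ := hM
  obtain ⟨-, hMTE, hMTind⟩ := hMT
  have hi : i ≤ m + r := by omega
  set a := nCount (P.take i) with ha
  have hQi : nCount (Q.take i) = a + k := hsq.2
  have hground := squareGround_union_subset_Icc hQi hi
  have hbij : BijOn (squareMap Q k i a) (squareGround Q (m + r) k i a) MT.E := by
    rw [hMTE, add_assoc, eCount_add_nCount, List.length_drop, hPQ.lenP]
    exact squareMap_bijOn hQi _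
  have hind : ∀ X ⊆ squareGround Q (m + r) k i a,
      M.Indep (X ∪ northPos Q '' Iio a) ↔ MT.Indep (squareMap Q k i a '' X) := fun X hX => by
    rw [hMind, hMTind, hME, isPartialTransversal_union_iff hPQ hsq hi ha.symm hX]
    exact and_congr_left fun _ => iff_of_true ((union_subset_union_left _ hX).trans hground)
      ((hbij.mapsTo.mono_left hX).image_subset)
  have hC : M.Indep (northPos Q '' Iio a) := by
    simpa using (hind ∅ (empty_subset _)).mpr (by simp)
  exact isIsoMinorOf_of_contract hC
    (subset_sdiff.mpr ⟨hME ▸ subset_union_left.trans hground, disjoint_squareGround hQi _⟩) hbij hind
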